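/- Let p, q ∈ [0,1] with p + q ≥ 1 and let (S, T) be distributed according to μ_{p,q}. Then μ_{p,q}-almost surely the configuration collapse(S,T) has no empty sites; equivalently, almost surely every site not in T carries a particle. -/

import Mathlib

open scoped Classical ENNReal
open MeasureTheory
open Fin.NatCast

/-- A site of ℤ is occupied by a particle, an anti-particle, or is empty. -/
inductive Site where
  | particle : Site
  | anti : Site
  | empty : Site
deriving DecidableEq

/-- Site `a` carries a particle in the collapse of (S, T) (subsets of ℤ encoded as
`ℤ → Bool`): `a ∉ T` and there is some `b ≥ a` with
`|[a,b] ∩ S| + |[a,b] ∩ T| ≥ b − a + 1`. -/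
def HasParticleZ (S T : ℤ → Bool) (a : ℤ) : Prop :=
  T a = false ∧ ∃ b : ℤ, a ≤ b ∧
    (Finset.Icc a b).card ≤
      ((Finset.Icc a b).filter fun n => S n = true).card +
        ((Finset.Icc a b).filter fun n => T n = true).card

/-- The collapse of (S, T) on ℤ: anti-particles exactly at T, particles at the
sites described by `HasParticleZ`, every other site empty. -/
noncomputable def collapseZ (S T : ℤ → Bool) : ℤ → Site := fun a =>
  if T a = true then Site.anti
  else if HasParticleZ S T a then Site.particle
  else Site.empty

set_option linter.unusedSectionVars false

section Core
variable {A : Type*} [Fintype A] [DecidableEq A]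
variable (x : A → ℤ) (N : ℕ) [NeZero N]

def Wsum (v : Fin N → A) (k : ℕ) : ℤ := ∑ i ∈ Finset.range k, x (v (i : Fin N))

def Stot (v : Fin N → A) : ℤ := ∑ i : Fin N, x (v i)

lemma Wsum_period (v : Fin N → A) (k : ℕ) :
    Wsum x N v (k + N) = Wsum x N v k + Stot x N v := by
  unfold Wsum Stot
  rw [Finset.sum_range_add]
  congr 1
  have h1 : ∀ i ∈ Finset.range N, x (v ((k + i : ℕ) : Fin N)) = x (v ((k : Fin N) + (i : ℕ))) := by
    intro i _
    push_cast
    ring_nf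
  rw [Finset.sum_congr rfl h1]
  have h2 : ∑ i ∈ Finset.range N, x (v ((k : Fin N) + (i : ℕ)))
      = ∑ j : Fin N, x (v ((k : Fin N) + j)) := by
    rw [← Fin.sum_univ_eq_sum_range (fun i : ℕ => x (v ((k : Fin N) + (i : ℕ))))]
    refine Finset.sum_congr rfl fun j _ => ?_
    congr 1
    simp [Fin.cast_val_eq_self]
  rw [h2]
  exact Fintype.sum_equiv (Equiv.addLeft (k : Fin N)) _ _ (fun j => rfl)

/-- starting at position k, all partial sums over the next N steps are ≤ -1 -/
def GoodFrom (v : Fin N → A) (k : ℕ) : Prop :=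
  ∀ n < N, Wsum x N v (k + n + 1) ≤ Wsum x N v k - 1

lemma Stot_le_neg_one {v : Fin N → A} {k : ℕ} (h : GoodFrom x N v k) :
    Stot x N v ≤ -1 := by
  have hN : 0 < N := Nat.pos_of_ne_zero (NeZero.ne N)
  have := h (N - 1) (by omega)
  have hper := Wsum_period x N v k
  have hkn : k + (N - 1) + 1 = k + N := by omega
  rw [hkn, hper] at this
  omega

lemma GoodFrom_descent {v : Fin N → A} {k : ℕ} (h : GoodFrom x N v k) :
    ∀ m, k < m → Wsum x N v m ≤ Wsum x N v k - 1 := by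
  have hN : 0 < N := Nat.pos_of_ne_zero (NeZero.ne N)
  intro m
  induction m using Nat.strong_induction_on with
  | _ m ih =>
    intro hkm
    by_cases hle : m ≤ k + N
    · have : m = k + (m - k - 1) + 1 := by omega
      rw [this]
      exact h (m - k - 1) (by omega)
    · have h1 : Wsum x N v m = Wsum x N v (m - N) + Stot x N v := by
        have : m - N + N = m := by omega
        conv_lhs => rw [← this]
        rw [Wsum_period]
      have h2 := ih (m - N) (by omega) (by omega)
      have h3 := Stot_le_neg_one x N h
      omega

end Core

section Count
variable {A : Type*} [Fintype A] [DecidableEq A]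
variable (x : A → ℤ) (N : ℕ) [NeZero N]

lemma count_good_le (v : Fin N → A) :
    ((Finset.univ.filter (fun r : Fin N => GoodFrom x N v r.val)).card : ℤ)
      ≤ max 0 (-(Stot x N v)) := by
  set G := Finset.univ.filter (fun r : Fin N => GoodFrom x N v r.val) with hG
  rcases G.eq_empty_or_nonempty with he | hne
  · simp [he]
  · obtain ⟨ρ, hρG⟩ := hne
    have hρgood : GoodFrom x N v ρ.val := by
      rw [hG] at hρG; exact (Finset.mem_filter.1 hρG).2
    -- replace ρ by the minimum
    set ρ₀ := G.min' ⟨ρ, hρG⟩ with hρ₀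
    have hρ₀G : ρ₀ ∈ G := G.min'_mem _
    have hρ₀good : GoodFrom x N v ρ₀.val := (Finset.mem_filter.1 hρ₀G).2
    have hS : Stot x N v ≤ -1 := Stot_le_neg_one x N hρ₀good
    have key : ∀ r ∈ G, Wsum x N v r.val ∈
        Finset.Icc (Wsum x N v ρ₀.val + Stot x N v + 1) (Wsum x N v ρ₀.val) := by
      intro r hrG
      have hrgood : GoodFrom x N v r.val := (Finset.mem_filter.1 hrG).2
      have hmin : ρ₀ ≤ r := G.min'_le r hrG
      have hub : Wsum x N v r.val ≤ Wsum x N v ρ₀.val := by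
        rcases eq_or_lt_of_le hmin with heq | hlt
        · rw [heq]
        · have := GoodFrom_descent x N hρ₀good r.val (by exact_mod_cast hlt)
          omega
      have hlb : Wsum x N v ρ₀.val + Stot x N v + 1 ≤ Wsum x N v r.val := by
        have hper := Wsum_period x N v ρ₀.val
        have hlt : r.val < ρ₀.val + N := by
          have := r.isLt; omega
        have := GoodFrom_descent x N hrgood (ρ₀.val + N) hlt
        omega
      exact Finset.mem_Icc.2 ⟨hlb, hub⟩
    have hinj : Set.InjOn (fun r : Fin N => Wsum x N v r.val) G := by
      intro r hr r' hr' hEq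
      by_contra hne'
      rcases Ne.lt_or_gt (fun h => hne' h) with hlt | hlt
      · have := GoodFrom_descent x N ((Finset.mem_filter.1 hr).2) r'.val
          (by exact_mod_cast hlt)
        simp only at hEq; omega
      · have := GoodFrom_descent x N ((Finset.mem_filter.1 hr').2) r.val
          (by exact_mod_cast hlt)
        simp only at hEq; omega
    have hcard := Finset.card_le_card_of_injOn _ key hinj
    have hIcc : (Finset.Icc (Wsum x N v ρ₀.val + Stot x N v + 1) (Wsum x N v ρ₀.val)).card
        = (-(Stot x N v)).toNat := by
      rw [Int.card_Icc]
      congr 1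
      omega
    rw [hIcc] at hcard
    have : ((-(Stot x N v)).toNat : ℤ) = -(Stot x N v) := by omega
    omega

end Count

section Moments
variable {A : Type*} [Fintype A] [DecidableEq A]
variable (x : A → ℤ) (N : ℕ) [NeZero N] (w : A → ℝ)

noncomputable def Wprod (v : Fin N → A) : ℝ := ∏ i, w (v i)

noncomputable def Sr (v : Fin N → A) : ℝ := ∑ i, ((x (v i) : ℝ))

lemma Sr_eq (v : Fin N → A) : Sr x N v = ((Stot x N v : ℝ)) := by
  unfold Sr Stot; push_cast; rfl

lemma prod_if_single (i : Fin N) (f g : Fin N → ℝ) :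
    ∏ k, (if k = i then g k else f k) = g i * ∏ k ∈ Finset.univ.erase i, f k := by
  rw [← Finset.mul_prod_erase Finset.univ _ (Finset.mem_univ i), if_pos rfl]
  exact congrArg _ (Finset.prod_congr rfl fun k hk => if_neg (Finset.mem_erase.1 hk).1)

lemma prod_if_pair {i j : Fin N} (hij : j ≠ i) (f g : Fin N → ℝ) :
    ∏ k, (if k = i ∨ k = j then g k else f k)
      = g i * g j * ∏ k ∈ (Finset.univ.erase i).erase j, f k := by
  rw [← Finset.mul_prod_erase Finset.univ _ (Finset.mem_univ i), if_pos (Or.inl rfl),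
      ← Finset.mul_prod_erase (Finset.univ.erase i) _
        (Finset.mem_erase.2 ⟨hij, Finset.mem_univ j⟩), if_pos (Or.inr rfl), ← mul_assoc]
  refine congrArg _ (Finset.prod_congr rfl fun k hk => if_neg ?_)
  have h := Finset.mem_erase.1 hk
  have h2 := Finset.mem_erase.1 h.2
  rintro (h' | h')
  · exact h2.1 h'
  · exact h.1 h'

lemma sum_Wprod (hw1 : ∑ a, w a = 1) : ∑ v : Fin N → A, Wprod N w v = 1 := by
  unfold Wprod
  rw [← Fintype.prod_sum fun (_ : Fin N) (a : A) => w a]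
  rw [Finset.prod_congr rfl fun k _ => hw1, Finset.prod_const_one]

lemma sum_Wprod_single (hw1 : ∑ a, w a = 1) (φ : A → ℝ) (i : Fin N) :
    ∑ v : Fin N → A, Wprod N w v * φ (v i) = ∑ a, w a * φ a := by
  have h1 : ∀ v : Fin N → A, Wprod N w v * φ (v i)
      = ∏ k, (fun (k : Fin N) (a : A) => if k = i then w a * φ a else w a) k (v k) := by
    intro v
    show Wprod N w v * φ (v i) = ∏ k, (if k = i then w (v k) * φ (v k) else w (v k))
    rw [prod_if_single N i (fun k => w (v k)) (fun k => w (v k) * φ (v k))]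
    unfold Wprod
    rw [← Finset.mul_prod_erase Finset.univ (fun k => w (v k)) (Finset.mem_univ i)]
    ring
  rw [Finset.sum_congr rfl (fun v _ => h1 v),
    ← Fintype.prod_sum (fun (k : Fin N) (a : A) => if k = i then w a * φ a else w a)]
  have h2 : ∀ k : Fin N, (∑ a, if k = i then w a * φ a else w a)
      = if k = i then (∑ a, w a * φ a) else 1 := by
    intro k; split_ifs with h <;> simp [hw1]
  rw [Finset.prod_congr rfl fun k _ => h2 k,
    prod_if_single N i (fun _ => (1 : ℝ)) (fun _ => ∑ a, w a * φ a),
    Finset.prod_const_one, mul_one]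

lemma sum_Wprod_pair (hw1 : ∑ a, w a = 1) (φ : A → ℝ) {i j : Fin N} (hij : j ≠ i) :
    ∑ v : Fin N → A, Wprod N w v * (φ (v i) * φ (v j))
      = (∑ a, w a * φ a) * (∑ a, w a * φ a) := by
  have h1 : ∀ v : Fin N → A, Wprod N w v * (φ (v i) * φ (v j))
      = ∏ k, (fun (k : Fin N) (a : A) => if k = i ∨ k = j then w a * φ a else w a) k (v k) := by
    intro v
    show Wprod N w v * (φ (v i) * φ (v j))
      = ∏ k, (if k = i ∨ k = j then w (v k) * φ (v k) else w (v k))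
    rw [prod_if_pair N hij (fun k => w (v k)) (fun k => w (v k) * φ (v k))]
    unfold Wprod
    rw [← Finset.mul_prod_erase Finset.univ (fun k => w (v k)) (Finset.mem_univ i),
      ← Finset.mul_prod_erase (Finset.univ.erase i) (fun k => w (v k))
        (Finset.mem_erase.2 ⟨hij, Finset.mem_univ j⟩)]
    ring
  rw [Finset.sum_congr rfl (fun v _ => h1 v),
    ← Fintype.prod_sum (fun (k : Fin N) (a : A) => if k = i ∨ k = j then w a * φ a else w a)]
  have h2 : ∀ k : Fin N, (∑ a, if k = i ∨ k = j then w a * φ a else w a)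
      = if k = i ∨ k = j then (∑ a, w a * φ a) else 1 := by
    intro k; split_ifs with h <;> simp [hw1]
  rw [Finset.prod_congr rfl fun k _ => h2 k,
    prod_if_pair N hij (fun _ => (1 : ℝ)) (fun _ => ∑ a, w a * φ a),
    Finset.prod_const_one, mul_one]

end Moments

section Master
variable {A : Type*} [Fintype A] [DecidableEq A]
variable (x : A → ℤ) (N : ℕ) [NeZero N] (w : A → ℝ)

lemma Wprod_nonneg (hw0 : ∀ a, 0 ≤ w a) (v : Fin N → A) : 0 ≤ Wprod N w v :=
  Finset.prod_nonneg fun i _ => hw0 (v i)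

lemma sum_Wprod_Sr (hw1 : ∑ a, w a = 1) :
    ∑ v : Fin N → A, Wprod N w v * Sr x N v = N * (∑ a, w a * (x a : ℝ)) := by
  have : ∀ v : Fin N → A, Wprod N w v * Sr x N v
      = ∑ i : Fin N, Wprod N w v * ((x (v i) : ℝ)) := by
    intro v; unfold Sr; rw [Finset.mul_sum]
  rw [Finset.sum_congr rfl fun v _ => this v, Finset.sum_comm]
  rw [Finset.sum_congr rfl fun i _ =>
    sum_Wprod_single N w hw1 (fun a => ((x a : ℝ))) i]
  rw [Finset.sum_const, Finset.card_univ, Fintype.card_fin, nsmul_eq_mul]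

lemma sum_Wprod_Sr_sq (hw1 : ∑ a, w a = 1) :
    ∑ v : Fin N → A, Wprod N w v * (Sr x N v * Sr x N v)
      = N * (∑ a, w a * ((x a : ℝ) * (x a : ℝ)))
        + N * ((N : ℝ) - 1) * ((∑ a, w a * (x a : ℝ)) * (∑ a, w a * (x a : ℝ))) := by
  set m := ∑ a, w a * (x a : ℝ) with hm
  set s2 := ∑ a, w a * ((x a : ℝ) * (x a : ℝ)) with hs2
  have key : ∀ i j : Fin N, ∑ v : Fin N → A, Wprod N w v * ((x (v i) : ℝ) * (x (v j) : ℝ))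
      = if j = i then s2 else m * m := by
    intro i j
    split_ifs with h
    · subst h
      exact sum_Wprod_single N w hw1 (fun a => (x a : ℝ) * (x a : ℝ)) j
    · exact sum_Wprod_pair N w hw1 (fun a => ((x a : ℝ))) h
  have expand : ∀ v : Fin N → A, Wprod N w v * (Sr x N v * Sr x N v)
      = ∑ i : Fin N, ∑ j : Fin N, Wprod N w v * ((x (v i) : ℝ) * (x (v j) : ℝ)) := by
    intro v
    unfold Sr
    rw [Finset.sum_mul_sum]
    rw [Finset.mul_sum]
    refine Finset.sum_congr rfl fun i _ => ?_
    rw [Finset.mul_sum]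
  rw [Finset.sum_congr rfl fun v _ => expand v]
  rw [Finset.sum_comm]
  have swap2 : ∀ i : Fin N, ∑ j : Fin N, ∑ v : Fin N → A,
      Wprod N w v * ((x (v i) : ℝ) * (x (v j) : ℝ)) = s2 + ((N : ℝ) - 1) * (m * m) := by
    intro i
    rw [Finset.sum_congr rfl fun j _ => key i j]
    have : ∀ j : Fin N, (if j = i then s2 else m * m)
        = (if j = i then s2 - m * m else 0) + m * m := by
      intro j; split_ifs <;> ring
    rw [Finset.sum_congr rfl fun j _ => this j, Finset.sum_add_distrib,
      Finset.sum_ite_eq' Finset.univ i (fun _ => s2 - m * m)]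
    simp [Finset.card_univ]
    ring
  rw [Finset.sum_congr rfl fun i _ => Finset.sum_comm.trans (swap2 i), Finset.sum_const, Finset.card_univ,
    Fintype.card_fin, nsmul_eq_mul]
  ring

end Master

section Master2
variable {A : Type*} [Fintype A] [DecidableEq A]
variable (x : A → ℤ) (N : ℕ) [NeZero N] (w : A → ℝ)

lemma sum_Wprod_dev_sq (hw0 : ∀ a, 0 ≤ w a) (hw1 : ∑ a, w a = 1)
    (hx : ∀ a, (x a : ℝ) * (x a : ℝ) ≤ 1) :
    ∑ v : Fin N → A, Wprod N w v *
        ((Sr x N v - N * (∑ a, w a * (x a : ℝ))) * (Sr x N v - N * (∑ a, w a * (x a : ℝ))))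
      ≤ N := by
  set m := ∑ a, w a * (x a : ℝ) with hm
  set s2 := ∑ a, w a * ((x a : ℝ) * (x a : ℝ)) with hs2
  have e1 := sum_Wprod_Sr_sq x N w hw1
  have e2 := sum_Wprod_Sr x N w hw1
  have e3 := sum_Wprod N w hw1
  have expand : ∀ v : Fin N → A, Wprod N w v * ((Sr x N v - N * m) * (Sr x N v - N * m))
      = Wprod N w v * (Sr x N v * Sr x N v) - (2 * ((N : ℝ) * m)) * (Wprod N w v * Sr x N v)
        + ((N : ℝ) * m) * ((N : ℝ) * m) * Wprod N w v := by
    intro v; ring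
  rw [Finset.sum_congr rfl fun v _ => expand v, Finset.sum_add_distrib,
    Finset.sum_sub_distrib, ← Finset.mul_sum, ← Finset.mul_sum, e1, e2, e3]
  have hs2le : s2 ≤ 1 := by
    rw [← hw1, hs2]
    refine Finset.sum_le_sum fun a _ => ?_
    calc w a * ((x a : ℝ) * (x a : ℝ)) ≤ w a * 1 := mul_le_mul_of_nonneg_left (hx a) (hw0 a)
    _ = w a := mul_one _
  have hN0 : (0 : ℝ) ≤ (N : ℝ) := Nat.cast_nonneg N
  nlinarith [sq_nonneg m, mul_nonneg hN0 (sq_nonneg m)]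

lemma Wsum_rot (r : Fin N) (v : Fin N → A) (k : ℕ) :
    Wsum x N (fun i => v (r + i)) k = Wsum x N v (r.val + k) - Wsum x N v r.val := by
  induction k with
  | zero => simp [Wsum]
  | succ n ih =>
    unfold Wsum at *
    rw [Finset.sum_range_succ, ih, ← Nat.add_assoc, Finset.sum_range_succ]
    have : v (r + (n : Fin N)) = v (((r.val + n : ℕ) : Fin N)) := by
      congr 1
      push_cast
      rfl
    simp only []
    rw [this]
    ring

lemma GoodFrom_rot (r : Fin N) (v : Fin N → A) :
    GoodFrom x N (fun i => v (r + i)) 0 ↔ GoodFrom x N v r.val := by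
  unfold GoodFrom
  constructor
  · intro h n hn
    have h2 := h n hn
    rw [Wsum_rot, Wsum_rot] at h2
    simp only [Nat.zero_add, Nat.add_zero] at h2
    rw [← Nat.add_assoc] at h2
    omega
  · intro h n hn
    have h2 := h n hn
    rw [Wsum_rot, Wsum_rot]
    simp only [Nat.zero_add, Nat.add_zero]
    rw [← Nat.add_assoc]
    omega

lemma Wprod_rot (r : Fin N) (v : Fin N → A) :
    Wprod N w (fun i => v (r + i)) = Wprod N w v := by
  unfold Wprod
  exact Fintype.prod_equiv (Equiv.addLeft r) _ _ (fun i => rfl)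

lemma rotation_sum (r : Fin N) :
    ∑ v : Fin N → A, (if GoodFrom x N v r.val then Wprod N w v else 0)
      = ∑ v : Fin N → A, (if GoodFrom x N v 0 then Wprod N w v else 0) := by
  have hbij : Function.Bijective (fun (v : Fin N → A) => (fun i => v (r + i) : Fin N → A)) := by
    have : (fun (v : Fin N → A) => (fun i => v (r + i) : Fin N → A))
        = fun v => v ∘ (Equiv.addLeft r) := by funext v i; rfl
    rw [this]
    exact (Equiv.arrowCongr (Equiv.addLeft r).symm (Equiv.refl A)).bijective
  refine Fintype.sum_bijective _ hbij _ _ fun v => ?_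
  rw [Wprod_rot]
  congr 1
  simp only [eq_iff_iff]
  exact (GoodFrom_rot x N r v).symm

end Master2

section MasterFinal
variable {A : Type*} [Fintype A] [DecidableEq A]
variable (x : A → ℤ) (N : ℕ) [NeZero N] (w : A → ℝ)

theorem master_bound (hw0 : ∀ a, 0 ≤ w a) (hw1 : ∑ a, w a = 1)
    (hx1 : ∀ a, (x a : ℝ) * (x a : ℝ) ≤ 1) (hmean : 0 ≤ ∑ a, w a * (x a : ℝ)) :
    ((N : ℝ) * ∑ v : Fin N → A, (if GoodFrom x N v 0 then Wprod N w v else 0)) ^ 2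
      ≤ (N : ℝ) := by
  classical
  set m := ∑ a, w a * (x a : ℝ) with hm
  set P := ∑ v : Fin N → A, (if GoodFrom x N v 0 then Wprod N w v else 0) with hP
  set Y : (Fin N → A) → ℝ := fun v => Sr x N v - N * m with hY
  have hN0 : (0 : ℝ) ≤ (N : ℝ) := Nat.cast_nonneg N
  have hP0 : 0 ≤ P := Finset.sum_nonneg fun v _ => by
    split_ifs
    · exact Wprod_nonneg N w hw0 v
    · exact le_refl 0
  -- step 1
  have step1 : (N : ℝ) * P = ∑ v : Fin N → A, Wprod N w v *
      ((Finset.univ.filter (fun r : Fin N => GoodFrom x N v r.val)).card : ℝ) := by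
    have h1 : ∑ r : Fin N, ∑ v : Fin N → A, (if GoodFrom x N v r.val then Wprod N w v else 0)
        = (N : ℝ) * P := by
      rw [Finset.sum_congr rfl fun r _ => rotation_sum x N w r]
      rw [Finset.sum_const, Finset.card_univ, Fintype.card_fin, nsmul_eq_mul]
    rw [← h1, Finset.sum_comm]
    refine Finset.sum_congr rfl fun v _ => ?_
    rw [← Finset.sum_filter, Finset.sum_const, nsmul_eq_mul, mul_comm]
  -- step 2
  have step2 : ∀ v : Fin N → A,
      ((Finset.univ.filter (fun r : Fin N => GoodFrom x N v r.val)).card : ℝ) ≤ |Y v| := by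
    intro v
    have h := count_good_le x N v
    have hcast : ((Finset.univ.filter (fun r : Fin N => GoodFrom x N v r.val)).card : ℝ)
        ≤ max 0 (-(Stot x N v : ℝ)) := by
      have : ((Finset.univ.filter (fun r : Fin N => GoodFrom x N v r.val)).card : ℝ)
          ≤ ((max 0 (-(Stot x N v)) : ℤ) : ℝ) := by exact_mod_cast h
      refine this.trans (le_of_eq ?_)
      push_cast
      rfl
    refine hcast.trans (max_le (abs_nonneg _) ?_)
    have hNm : 0 ≤ (N : ℝ) * m := mul_nonneg hN0 hmean
    have : -(Stot x N v : ℝ) ≤ -(Y v) := by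
      rw [hY]
      simp only [Sr_eq]
      linarith
    exact this.trans (neg_le_abs _)
  -- step 3 : Cauchy-Schwarz
  have step3 : (∑ v : Fin N → A, Wprod N w v * |Y v|) ^ 2
      ≤ (∑ v : Fin N → A, Wprod N w v) * ∑ v : Fin N → A, Wprod N w v * (Y v * Y v) := by
    refine Finset.sum_sq_le_sum_mul_sum_of_sq_eq_mul Finset.univ
      (fun v _ => Wprod_nonneg N w hw0 v)
      (fun v _ => mul_nonneg (Wprod_nonneg N w hw0 v) (mul_self_nonneg _)) (fun v _ => ?_)
    rw [sq]
    calc Wprod N w v * |Y v| * (Wprod N w v * |Y v|)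
        = Wprod N w v * (Wprod N w v * (|Y v| * |Y v|)) := by ring
      _ = Wprod N w v * (Wprod N w v * (Y v * Y v)) := by rw [abs_mul_abs_self]
  have hvar : ∑ v : Fin N → A, Wprod N w v * (Y v * Y v) ≤ N :=
    sum_Wprod_dev_sq x N w hw0 hw1 hx1
  have hsum1 : ∑ v : Fin N → A, Wprod N w v = 1 := sum_Wprod N w hw1
  have chain : (N : ℝ) * P ≤ ∑ v : Fin N → A, Wprod N w v * |Y v| := by
    rw [step1]
    exact Finset.sum_le_sum fun v _ =>
      mul_le_mul_of_nonneg_left (step2 v) (Wprod_nonneg N w hw0 v)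
  have habs0 : 0 ≤ ∑ v : Fin N → A, Wprod N w v * |Y v| :=
    Finset.sum_nonneg fun v _ => mul_nonneg (Wprod_nonneg N w hw0 v) (abs_nonneg _)
  calc ((N : ℝ) * P) ^ 2 ≤ (∑ v : Fin N → A, Wprod N w v * |Y v|) ^ 2 := by
        apply pow_le_pow_left₀ (mul_nonneg hN0 hP0) chain
    _ ≤ (∑ v : Fin N → A, Wprod N w v) * ∑ v : Fin N → A, Wprod N w v * (Y v * Y v) := step3
    _ ≤ 1 * (N : ℝ) := by
        rw [hsum1]
        exact mul_le_mul_of_nonneg_left hvar zero_le_one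
    _ = (N : ℝ) := one_mul _

end MasterFinal

theorem good_sum_le {A : Type*} [Fintype A] [DecidableEq A]
    (x : A → ℤ) (w : A → ℝ) (M : ℕ) (hM : 0 < M) [NeZero (M * M)]
    (hw0 : ∀ a, 0 ≤ w a) (hw1 : ∑ a, w a = 1)
    (hx1 : ∀ a, (x a : ℝ) * (x a : ℝ) ≤ 1) (hmean : 0 ≤ ∑ a, w a * (x a : ℝ)) :
    ∑ v ∈ Finset.univ.filter (fun v : Fin (M * M) → A => GoodFrom x (M * M) v 0),
        Wprod (M * M) w v ≤ 1 / M := by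
  classical
  set N := M * M with hN
  set P := ∑ v : Fin N → A, (if GoodFrom x N v 0 then Wprod N w v else 0) with hP
  have hPfilter : ∑ v ∈ Finset.univ.filter (fun v : Fin N → A => GoodFrom x N v 0),
      Wprod N w v = P := (Finset.sum_filter _ _)
  rw [hPfilter]
  have hP0 : 0 ≤ P := Finset.sum_nonneg fun v _ => by
    split_ifs
    · exact Wprod_nonneg N w hw0 v
    · exact le_refl 0
  have hMR : (0 : ℝ) < (M : ℝ) := by exact_mod_cast hM
  have hmain := master_bound x N w hw0 hw1 hx1 hmean
  have hNcast : ((N : ℕ) : ℝ) = (M : ℝ) * (M : ℝ) := by rw [hN]; push_cast; ring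
  rw [hNcast] at hmain
  have hkey : (M : ℝ) * (M : ℝ) * P ≤ (M : ℝ) := by
    nlinarith [mul_nonneg (mul_nonneg hMR.le hMR.le) hP0]
  rw [le_div_iff₀ hMR]
  nlinarith

/-! measure part -/

def siteX : Bool × Bool → ℤ := fun a =>
  (if a.1 then 1 else 0) + (if a.2 then 1 else 0) - 1

noncomputable def siteW (pr qr : ℝ) : Bool × Bool → ℝ := fun a =>
  (if a.1 then pr else 1 - pr) * (if a.2 then qr else 1 - qr)

noncomputable def siteWE (p q : ℝ≥0∞) : Bool × Bool → ℝ≥0∞ := fun a =>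
  (if a.1 then p else 1 - p) * (if a.2 then q else 1 - q)

lemma siteW_nonneg {pr qr : ℝ} (h0p : 0 ≤ pr) (h1p : pr ≤ 1) (h0q : 0 ≤ qr) (h1q : qr ≤ 1)
    (a : Bool × Bool) : 0 ≤ siteW pr qr a := by
  unfold siteW
  apply mul_nonneg <;> split_ifs <;> linarith

lemma siteW_sum (pr qr : ℝ) : ∑ a : Bool × Bool, siteW pr qr a = 1 := by
  rw [Fintype.sum_prod_type]
  simp [siteW, Fintype.sum_bool]
  ring

lemma siteW_mean (pr qr : ℝ) :
    ∑ a : Bool × Bool, siteW pr qr a * (siteX a : ℝ) = pr + qr - 1 := by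
  rw [Fintype.sum_prod_type]
  simp [siteW, siteX, Fintype.sum_bool]
  ring

lemma siteX_sq (a : Bool × Bool) : ((siteX a : ℝ)) * (siteX a : ℝ) ≤ 1 := by
  rcases a with ⟨b, c⟩
  cases b <;> cases c <;> norm_num [siteX]

lemma siteWE_eq {p q : ℝ≥0∞} (hp : p ≤ 1) (hq : q ≤ 1) (a : Bool × Bool) :
    siteWE p q a = ENNReal.ofReal (siteW p.toReal q.toReal a) := by
  have hpt : p ≠ ⊤ := ne_top_of_le_ne_top ENNReal.one_ne_top hp
  have hqt : q ≠ ⊤ := ne_top_of_le_ne_top ENNReal.one_ne_top hq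
  have h1 : (if a.1 then p else 1 - p) = ENNReal.ofReal (if a.1 then p.toReal else 1 - p.toReal) := by
    split_ifs
    · exact (ENNReal.ofReal_toReal hpt).symm
    · rw [ENNReal.ofReal_sub _ ENNReal.toReal_nonneg, ENNReal.ofReal_one,
        ENNReal.ofReal_toReal hpt]
  have h2 : (if a.2 then q else 1 - q) = ENNReal.ofReal (if a.2 then q.toReal else 1 - q.toReal) := by
    split_ifs
    · exact (ENNReal.ofReal_toReal hqt).symm
    · rw [ENNReal.ofReal_sub _ ENNReal.toReal_nonneg, ENNReal.ofReal_one,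
        ENNReal.ofReal_toReal hqt]
  unfold siteWE siteW
  rw [h1, h2, ← ENNReal.ofReal_mul]
  split_ifs
  · exact ENNReal.toReal_nonneg
  · have : p.toReal ≤ 1 := by
      rw [← ENNReal.toReal_one]
      exact ENNReal.toReal_mono ENNReal.one_ne_top hp
    linarith

/-- extension of a finite window to a full configuration -/
def extv (a : ℤ) (N : ℕ) (v : Fin N → Bool × Bool) : ℤ → Bool × Bool := fun z =>
  if h : 0 ≤ z - a ∧ z - a < N then v ⟨(z - a).toNat, by omega⟩ else (false, false)

lemma extv_apply (a : ℤ) (N : ℕ) (v : Fin N → Bool × Bool) (i : Fin N) :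
    extv a N v (a + (i : ℤ)) = v i := by
  unfold extv
  have h : 0 ≤ (a + (i : ℤ)) - a ∧ (a + (i : ℤ)) - a < N := by
    constructor <;> [omega; · have := i.isLt; omega]
  rw [dif_pos h]
  congr 1
  ext
  simp

def cylIdx (a : ℤ) (N : ℕ) : Finset ℤ := Finset.image (fun i : Fin N => a + (i : ℤ)) Finset.univ

def cyl (a : ℤ) (N : ℕ) (v : Fin N → Bool × Bool) : Set ((ℤ → Bool) × (ℤ → Bool)) :=
  {ω | (∀ n ∈ cylIdx a N, ω.1 n = (extv a N v n).1) ∧ (∀ n ∈ cylIdx a N, ω.2 n = (extv a N v n).2)}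

lemma cyl_measurable (a : ℤ) (N : ℕ) (v : Fin N → Bool × Bool) : MeasurableSet (cyl a N v) := by
  have : cyl a N v = ⋂ n ∈ cylIdx a N,
      ({ω : (ℤ → Bool) × (ℤ → Bool) | ω.1 n = (extv a N v n).1} ∩
       {ω | ω.2 n = (extv a N v n).2}) := by
    ext ω
    simp only [cyl, Set.mem_setOf_eq, Set.mem_iInter, Set.mem_inter_iff]
    constructor
    · rintro ⟨h1, h2⟩ n hn; exact ⟨h1 n hn, h2 n hn⟩
    · intro h; exact ⟨fun n hn => (h n hn).1, fun n hn => (h n hn).2⟩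
  rw [this]
  refine MeasurableSet.biInter (Finset.countable_toSet _) fun n _ => ?_
  refine MeasurableSet.inter ?_ ?_
  · exact ((measurable_pi_apply n).comp measurable_fst) (measurableSet_singleton _)
  · exact ((measurable_pi_apply n).comp measurable_snd) (measurableSet_singleton _)

lemma cyl_disjoint (a : ℤ) (N : ℕ) {v v' : Fin N → Bool × Bool} (h : v ≠ v') :
    Disjoint (cyl a N v) (cyl a N v') := by
  rw [Set.disjoint_left]
  rintro ω ⟨h1, h2⟩ ⟨h1', h2'⟩
  apply h
  funext i
  have hmem : a + (i : ℤ) ∈ cylIdx a N := Finset.mem_image_of_mem _ (Finset.mem_univ i)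
  have e1 := (h1 _ hmem).symm.trans (h1' _ hmem)
  have e2 := (h2 _ hmem).symm.trans (h2' _ hmem)
  rw [extv_apply, extv_apply] at e1 e2
  exact Prod.ext e1 e2

lemma cyl_measure {p q : ℝ≥0∞} {μ : Measure ((ℤ → Bool) × (ℤ → Bool))}
    (hμ : ∀ (E F : Finset ℤ) (f g : ℤ → Bool),
      μ {ω | (∀ n ∈ E, ω.1 n = f n) ∧ (∀ n ∈ F, ω.2 n = g n)} =
        (∏ n ∈ E, if f n then p else 1 - p) * ∏ n ∈ F, if g n then q else 1 - q)
    (a : ℤ) (N : ℕ) (v : Fin N → Bool × Bool) :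
    μ (cyl a N v) = ∏ i : Fin N, siteWE p q (v i) := by
  have := hμ (cylIdx a N) (cylIdx a N) (fun n => (extv a N v n).1) (fun n => (extv a N v n).2)
  rw [show cyl a N v = {ω : (ℤ → Bool) × (ℤ → Bool) |
    (∀ n ∈ cylIdx a N, ω.1 n = (extv a N v n).1) ∧
    (∀ n ∈ cylIdx a N, ω.2 n = (extv a N v n).2)} from rfl, this]
  have hinj : ∀ i ∈ (Finset.univ : Finset (Fin N)), ∀ j ∈ (Finset.univ : Finset (Fin N)),
      a + (i : ℤ) = a + (j : ℤ) → i = j := by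
    intro i _ j _ hij
    have h2 : ((i : ℕ) : ℤ) = ((j : ℕ) : ℤ) := by omega
    have h3 : (i : ℕ) = (j : ℕ) := by exact_mod_cast h2
    exact Fin.ext h3
  simp only [cylIdx]
  rw [Finset.prod_image hinj, Finset.prod_image hinj, ← Finset.prod_mul_distrib]
  refine Finset.prod_congr rfl fun i _ => ?_
  rw [extv_apply]
  rfl

lemma card_filter_eq_sum (f : ℤ → Bool) (a : ℤ) (n : ℕ) :
    (((Finset.Icc a (a + (n : ℤ))).filter fun z => f z = true).card : ℤ)
      = ∑ i ∈ Finset.range (n + 1), (if f (a + (i : ℤ)) then (1 : ℤ) else 0) := by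
  have himg : Finset.Icc a (a + (n : ℤ))
      = Finset.image (fun i : ℕ => a + (i : ℤ)) (Finset.range (n + 1)) := by
    ext z
    simp only [Finset.mem_Icc, Finset.mem_image, Finset.mem_range]
    constructor
    · rintro ⟨h1, h2⟩
      exact ⟨(z - a).toNat, by omega, by omega⟩
    · rintro ⟨i, hi, rfl⟩
      omega
  have hinj : ∀ i ∈ Finset.range (n + 1), ∀ j ∈ Finset.range (n + 1),
      a + (i : ℤ) = a + (j : ℤ) → i = j := by
    intro i _ j _ h; omega
  rw [Finset.card_filter, himg, Finset.sum_image hinj]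
  push_cast
  rfl

lemma bad_subset (a : ℤ) (N : ℕ) [NeZero N] :
    {ω : (ℤ → Bool) × (ℤ → Bool) | collapseZ ω.1 ω.2 a = Site.empty}
      ⊆ ⋃ v ∈ Finset.univ.filter
          (fun v : Fin N → Bool × Bool => GoodFrom siteX N v 0), cyl a N v := by
  intro ω hω
  simp only [Set.mem_setOf_eq, collapseZ] at hω
  have hT : ¬ (ω.2 a = true) := by
    intro h; rw [if_pos h] at hω; exact Site.noConfusion hω
  rw [if_neg hT] at hω
  have hNP : ¬ HasParticleZ ω.1 ω.2 a := by
    intro h; rw [if_pos h] at hω; exact Site.noConfusion hω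
  have hTfalse : ω.2 a = false := by
    cases h : ω.2 a
    · rfl
    · exact absurd h hT
  have hcount : ∀ n : ℕ,
      ((Finset.Icc a (a + (n : ℤ))).filter fun z => ω.1 z = true).card +
        ((Finset.Icc a (a + (n : ℤ))).filter fun z => ω.2 z = true).card ≤ n := by
    intro n
    by_contra hcon
    push_neg at hcon
    apply hNP
    refine ⟨hTfalse, a + (n : ℤ), by omega, ?_⟩
    have hcard : (Finset.Icc a (a + (n : ℤ))).card = n + 1 := by
      rw [Int.card_Icc]
      omega
    omega
  set v : Fin N → Bool × Bool := fun i => (ω.1 (a + (i : ℤ)), ω.2 (a + (i : ℤ))) with hv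
  have hgood : GoodFrom siteX N v 0 := by
    intro n hn
    have hkey := hcount n
    have h1 := card_filter_eq_sum ω.1 a n
    have h2 := card_filter_eq_sum ω.2 a n
    have hWs : Wsum siteX N v (0 + n + 1)
        = (∑ i ∈ Finset.range (n + 1), (if ω.1 (a + (i : ℤ)) then (1 : ℤ) else 0))
          + (∑ i ∈ Finset.range (n + 1), (if ω.2 (a + (i : ℤ)) then (1 : ℤ) else 0))
          - (n + 1) := by
      unfold Wsum
      rw [Nat.zero_add]
      have hterm : ∀ i ∈ Finset.range (n + 1), siteX (v ((i : ℕ) : Fin N))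
          = ((if ω.1 (a + (i : ℤ)) then (1 : ℤ) else 0)
            + (if ω.2 (a + (i : ℤ)) then (1 : ℤ) else 0)) - 1 := by
        intro i hi
        have hiN : i < N := by
          have := Finset.mem_range.1 hi; omega
        have hval : (((i : Fin N)) : ℕ) = i := Fin.val_cast_of_lt hiN
        rw [hv]
        simp only [siteX, hval]
      rw [Finset.sum_congr rfl hterm, Finset.sum_sub_distrib, Finset.sum_const,
        Finset.card_range, ← Finset.sum_add_distrib]
      simp only [nsmul_eq_mul, mul_one]
      push_cast
      ring
    have hWs0 : Wsum siteX N v 0 = 0 := by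
      unfold Wsum; simp
    rw [hWs, hWs0]
    have hle : ((((Finset.Icc a (a + (n : ℤ))).filter fun z => ω.1 z = true).card : ℤ) +
        (((Finset.Icc a (a + (n : ℤ))).filter fun z => ω.2 z = true).card : ℤ)) ≤ n := by
      exact_mod_cast hkey
    omega
  refine Set.mem_biUnion (Finset.mem_filter.2 ⟨Finset.mem_univ v, hgood⟩) ?_
  refine ⟨fun n hn => ?_, fun n hn => ?_⟩ <;>
  · obtain ⟨i, _, rfl⟩ := Finset.mem_image.1 hn
    rw [extv_apply]

lemma bad_measure_le {p q : ℝ≥0∞} (hp : p ≤ 1) (hq : q ≤ 1) (hpq : 1 ≤ p + q)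
    {μ : Measure ((ℤ → Bool) × (ℤ → Bool))}
    (hμ : ∀ (E F : Finset ℤ) (f g : ℤ → Bool),
      μ {ω | (∀ n ∈ E, ω.1 n = f n) ∧ (∀ n ∈ F, ω.2 n = g n)} =
        (∏ n ∈ E, if f n then p else 1 - p) * ∏ n ∈ F, if g n then q else 1 - q)
    (a : ℤ) (M : ℕ) (hM : 0 < M) :
    μ {ω : (ℤ → Bool) × (ℤ → Bool) | collapseZ ω.1 ω.2 a = Site.empty}
      ≤ ENNReal.ofReal (1 / M) := by
  haveI : NeZero (M * M) := ⟨by positivity⟩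
  set N := M * M with hN
  set pr := p.toReal with hpr
  set qr := q.toReal with hqr
  have hpt : p ≠ ⊤ := ne_top_of_le_ne_top ENNReal.one_ne_top hp
  have hqt : q ≠ ⊤ := ne_top_of_le_ne_top ENNReal.one_ne_top hq
  have hpr1 : pr ≤ 1 := by
    rw [hpr, ← ENNReal.toReal_one]
    exact ENNReal.toReal_mono ENNReal.one_ne_top hp
  have hqr1 : qr ≤ 1 := by
    rw [hqr, ← ENNReal.toReal_one]
    exact ENNReal.toReal_mono ENNReal.one_ne_top hq
  have hmean : 0 ≤ ∑ b : Bool × Bool, siteW pr qr b * (siteX b : ℝ) := by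
    rw [siteW_mean]
    have hsum : 1 ≤ pr + qr := by
      have htop : p + q ≠ ⊤ := by
        intro h
        rcases ENNReal.add_eq_top.1 h with h | h
        · exact hpt h
        · exact hqt h
      have := ENNReal.toReal_mono htop hpq
      rw [ENNReal.toReal_one, ENNReal.toReal_add hpt hqt] at this
      exact this
    linarith
  have hw0 : ∀ b, 0 ≤ siteW pr qr b :=
    siteW_nonneg ENNReal.toReal_nonneg hpr1 ENNReal.toReal_nonneg hqr1
  calc μ {ω : (ℤ → Bool) × (ℤ → Bool) | collapseZ ω.1 ω.2 a = Site.empty}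
      ≤ μ (⋃ v ∈ Finset.univ.filter
          (fun v : Fin N → Bool × Bool => GoodFrom siteX N v 0), cyl a N v) :=
        measure_mono (bad_subset a N)
    _ = ∑ v ∈ Finset.univ.filter
          (fun v : Fin N → Bool × Bool => GoodFrom siteX N v 0), μ (cyl a N v) := by
        refine measure_biUnion_finset ?_ fun v _ => cyl_measurable a N v
        intro v _ v' _ hne
        exact cyl_disjoint a N hne
    _ = ∑ v ∈ Finset.univ.filter
          (fun v : Fin N → Bool × Bool => GoodFrom siteX N v 0),
          ENNReal.ofReal (Wprod N (siteW pr qr) v) := by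
        refine Finset.sum_congr rfl fun v _ => ?_
        rw [cyl_measure hμ a N v]
        unfold Wprod
        rw [ENNReal.ofReal_prod_of_nonneg fun i _ => hw0 (v i)]
        exact Finset.prod_congr rfl fun i _ => siteWE_eq hp hq (v i)
    _ = ENNReal.ofReal (∑ v ∈ Finset.univ.filter
          (fun v : Fin N → Bool × Bool => GoodFrom siteX N v 0),
          Wprod N (siteW pr qr) v) := by
        exact (ENNReal.ofReal_sum_of_nonneg fun v _ => Finset.prod_nonneg fun i _ => hw0 (v i)).symm
    _ ≤ ENNReal.ofReal (1 / M) := by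
        apply ENNReal.ofReal_le_ofReal
        exact good_sum_le siteX (siteW pr qr) M hM hw0 (siteW_sum pr qr) siteX_sq hmean

/-- If p + q ≥ 1 and (S, T) ~ μ_{p,q} (all events {n ∈ S}, {n ∈ T} independent
with P(n ∈ S) = p, P(n ∈ T) = q), then almost surely collapse(S,T) has no empty
sites, i.e. almost surely every site not in T carries a particle. -/
theorem no_empty_sites (p q : ℝ≥0∞) (hp : p ≤ 1) (hq : q ≤ 1) (hpq : 1 ≤ p + q)
    (μ : Measure ((ℤ → Bool) × (ℤ → Bool))) [IsProbabilityMeasure μ]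
    (hμ : ∀ (E F : Finset ℤ) (f g : ℤ → Bool),
      μ {ω | (∀ n ∈ E, ω.1 n = f n) ∧ (∀ n ∈ F, ω.2 n = g n)} =
        (∏ n ∈ E, if f n then p else 1 - p) * ∏ n ∈ F, if g n then q else 1 - q) :
    μ {ω | ∀ a : ℤ, collapseZ ω.1 ω.2 a ≠ Site.empty} = 1 := by
  have hbad : ∀ a : ℤ,
      μ {ω : (ℤ → Bool) × (ℤ → Bool) | collapseZ ω.1 ω.2 a = Site.empty} = 0 := by
    intro a
    refine le_antisymm ?_ (zero_le)
    refine ENNReal.le_of_forall_pos_le_add fun ε hε _ => ?_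
    rw [zero_add]
    obtain ⟨M, hM⟩ := exists_nat_one_div_lt (show (0 : ℝ) < (ε : ℝ) by exact_mod_cast hε)
    calc μ {ω : (ℤ → Bool) × (ℤ → Bool) | collapseZ ω.1 ω.2 a = Site.empty}
        ≤ ENNReal.ofReal (1 / (M + 1 : ℕ)) :=
          bad_measure_le hp hq hpq hμ a (M + 1) (Nat.succ_pos M)
      _ ≤ (ε : ℝ≥0∞) := by
          rw [← ENNReal.ofReal_coe_nnreal]
          apply ENNReal.ofReal_le_ofReal
          push_cast
          push_cast at hM
          linarith
  have hunion : μ (⋃ a : ℤ, {ω : (ℤ → Bool) × (ℤ → Bool) | collapseZ ω.1 ω.2 a = Site.empty})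
      = 0 := by
    refine le_antisymm ?_ (zero_le)
    calc μ (⋃ a : ℤ, {ω : (ℤ → Bool) × (ℤ → Bool) | collapseZ ω.1 ω.2 a = Site.empty})
        ≤ ∑' a : ℤ, μ {ω : (ℤ → Bool) × (ℤ → Bool) | collapseZ ω.1 ω.2 a = Site.empty} :=
          measure_iUnion_le _
      _ = 0 := by simp [hbad]
  have hcompl : {ω : (ℤ → Bool) × (ℤ → Bool) | ∀ a : ℤ, collapseZ ω.1 ω.2 a ≠ Site.empty}
      = (⋃ a : ℤ, {ω : (ℤ → Bool) × (ℤ → Bool) | collapseZ ω.1 ω.2 a = Site.empty})ᶜ := by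
    ext ω
    simp [Set.mem_iUnion]
  refine le_antisymm prob_le_one ?_
  have h1 : (1 : ℝ≥0∞) = μ Set.univ := (measure_univ).symm
  rw [h1, hcompl]
  calc μ Set.univ
      = μ ((⋃ a : ℤ, {ω : (ℤ → Bool) × (ℤ → Bool) | collapseZ ω.1 ω.2 a = Site.empty})ᶜ
          ∪ (⋃ a : ℤ, {ω : (ℤ → Bool) × (ℤ → Bool) | collapseZ ω.1 ω.2 a = Site.empty})) := by
        rw [Set.compl_union_self]
    _ ≤ μ ((⋃ a : ℤ, {ω : (ℤ → Bool) × (ℤ → Bool) | collapseZ ω.1 ω.2 a = Site.empty})ᶜ)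
        + μ (⋃ a : ℤ, {ω : (ℤ → Bool) × (ℤ → Bool) | collapseZ ω.1 ω.2 a = Site.empty}) :=
        measure_union_le _ _
    _ = μ ((⋃ a : ℤ, {ω : (ℤ → Bool) × (ℤ → Bool) | collapseZ ω.1 ω.2 a = Site.empty})ᶜ) := by
        rw [hunion, add_zero]
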